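/- Let S ∈ ℚ⟦X⟧ be the power series with coeff n S = 1/(n+1)! for n even and coeff n S = 0 for n odd. Then for every integer q ≥ 2, coeff (2q−2) ( S · ((rescale (1/2) S)⁻¹)^{2q} ) = 0. -/

import Mathlib

open PowerSeries

/-!
Write `G` for `rescale (1/2) S`, the series of `sinh(z/2)/(z/2)`. The doubling formula
`sinh z = 2 sinh(z/2) cosh(z/2)` says `S = G · (X G)'`, so the coefficient in question is
`[X^k] G^{-(k+1)} (X G)'` with `k = 2q - 2`. Up to the factor `X^{k+1}`, this is the residue of
`H'/H^{k+1}` for `H = X G`, which vanishes because `H'/H^{k+1}` is a derivative. Concretely,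
`k · G^{-(k+1)} (X G)' = k G^{-k} - X (G^{-k})'`, and the Euler operator `X d/dX` multiplies
the `k`-th coefficient by `k`.
-/

namespace PowerSeries

section CommSemiring

variable {R : Type*} [CommSemiring R]

theorem coeff_X_mul_derivative (f : R⟦X⟧) (n : ℕ) :
    coeff n (X * d⁄dX R f) = n * coeff n f := by
  cases n with
  | zero => simp
  | succ n => rw [coeff_succ_X_mul, coeff_derivative]; push_cast; ring

theorem derivative_rescale (a : R) (f : R⟦X⟧) :
    d⁄dX R (rescale a f) = C a * rescale a (d⁄dX R f) := by
  ext n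
  simp only [coeff_derivative, coeff_rescale, coeff_C_mul]
  ring

end CommSemiring

theorem coeff_inv_pow_succ_mul_derivative_X_mul_eq_zero {K : Type*} [Field K] [CharZero K]
    {G : K⟦X⟧} (hG : constantCoeff G ≠ 0) {k : ℕ} (hk : k ≠ 0) :
    coeff k (G⁻¹ ^ (k + 1) * d⁄dX K (X * G)) = 0 := by
  set B := G⁻¹
  have hGB : G * B = 1 := PowerSeries.mul_inv_cancel G hG
  have hderiv : d⁄dX K (B ^ k) = -(k : K⟦X⟧) * (B ^ (k + 1) * d⁄dX K G) := by
    rw [derivative_pow, derivative_inv', show k + 1 = k - 1 + 2 by omega]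
    ring
  have hexpand : (k : K⟦X⟧) * (B ^ (k + 1) * d⁄dX K (X * G)) = (k : K⟦X⟧) * B ^ k - X * d⁄dX K (B ^ k) := by
    rw [hderiv, Derivation.leibniz, derivative_X, pow_succ, smul_eq_mul, smul_eq_mul]
    linear_combination (k : K⟦X⟧) * B ^ k * hGB
  have := congrArg (coeff k) hexpand
  rw [map_sub, coeff_X_mul_derivative, ← map_natCast (C (R := K)), coeff_C_mul, coeff_C_mul,
    sub_self, mul_eq_zero] at this
  exact this.resolve_left (Nat.cast_ne_zero.mpr hk)

end PowerSeries

section Sinhc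

variable {S : ℚ⟦X⟧}

theorem C_two_mul_mul_X_mul_rescale_eq_exp_sub
    (hS : ∀ n : ℕ, coeff n S = if Even n then ((Nat.factorial (n + 1) : ℚ))⁻¹ else 0) (a : ℚ) :
    C (2 * a) * (X * rescale a S) = rescale a (exp ℚ) - rescale (-a) (exp ℚ) := by
  ext n
  rw [coeff_C_mul, map_sub, coeff_rescale, coeff_rescale, coeff_exp, Algebra.algebraMap_self_apply]
  cases n with
  | zero => simp
  | succ n =>
    rw [coeff_succ_X_mul, coeff_rescale, hS n]
    rcases Nat.even_or_odd n with h | h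
    · rw [if_pos h, neg_pow, h.add_one.neg_one_pow]
      ring
    · rw [if_neg (Nat.not_even_iff_odd.mpr h), neg_pow, h.add_one.neg_one_pow]
      ring

theorem eq_rescale_mul_derivative_X_mul_rescale
    (hS : ∀ n : ℕ, coeff n S = if Even n then ((Nat.factorial (n + 1) : ℚ))⁻¹ else 0) :
    S = rescale (1 / 2) S * d⁄dX ℚ (X * rescale (1 / 2) S) := by
  set G := rescale (1 / 2 : ℚ) S
  set E := rescale (1 / 2 : ℚ) (exp ℚ)
  set F := rescale (-(1 / 2) : ℚ) (exp ℚ)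
  have hXG : X * G = E - F := by
    have := C_two_mul_mul_X_mul_rescale_eq_exp_sub hS (1 / 2)
    rwa [show (2 : ℚ) * (1 / 2) = 1 by norm_num, map_one, one_mul] at this
  have hXS : C 2 * (X * S) = E * E - F * F := by
    rw [exp_mul_exp_eq_exp_add, exp_mul_exp_eq_exp_add]
    convert C_two_mul_mul_X_mul_rescale_eq_exp_sub hS 1 using 3 <;> norm_num
  have hderiv : d⁄dX ℚ (X * G) = C (1 / 2) * (E + F) := by
    rw [hXG, map_sub, derivative_rescale, derivative_rescale, derivative_exp, map_neg]
    ring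
  apply X_mul_cancel
  apply mul_left_cancel₀ (show (C 2 : ℚ⟦X⟧) ≠ 0 by simp)
  rw [hXS, hderiv, ← mul_assoc X, hXG]
  have hC : C (2 : ℚ) * C (1 / 2) = 1 := by rw [← map_mul]; norm_num
  linear_combination -(E - F) * (E + F) * hC

end Sinhc

/-- Let `S ∈ ℚ⟦X⟧` be the Taylor series of `sinh(u)/u`
(`coeff n S = 1/(n+1)!` for even `n`, `0` for odd `n`). Then for every `q ≥ 2`,
the coefficient of `X^(2q-2)` in `S * ((rescale (1/2) S)⁻¹)^(2q)` vanishes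
(vanishing of the Â-genus of `Sp_q/(Sp_1 × Sp_{q-1})`). -/
theorem coeff_Ahat_KP_eq_zero (S : PowerSeries ℚ)
    (hS : ∀ n : ℕ, coeff n S =
      if Even n then ((Nat.factorial (n + 1) : ℚ))⁻¹ else 0) :
    ∀ q : ℕ, 2 ≤ q →
      coeff (2 * q - 2) (S * ((rescale (1 / 2 : ℚ) S)⁻¹) ^ (2 * q)) = 0 := by
  intro q hq
  set G := rescale (1 / 2 : ℚ) S
  set k := 2 * q - 2
  have hG : constantCoeff G ≠ 0 := by
    rw [← coeff_zero_eq_constantCoeff_apply, coeff_rescale, hS 0]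
    norm_num
  have hGG : G * G⁻¹ = 1 := PowerSeries.mul_inv_cancel G hG
  have hS' : S * G⁻¹ ^ (k + 2) = G⁻¹ ^ (k + 1) * d⁄dX ℚ (X * G) := by
    rw [eq_rescale_mul_derivative_X_mul_rescale hS]
    linear_combination G⁻¹ ^ (k + 1) * d⁄dX ℚ (X * G) * hGG
  rw [show 2 * q = k + 2 by omega, hS']
  exact coeff_inv_pow_succ_mul_derivative_X_mul_eq_zero hG (by omega)
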